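/- arXiv:math/0605257 — 7 statements merged into one kernel-verified Lean document; each statement's English description precedes it below -/
import Mathlib

section
/- Let R be a commutative ring in which 2 is invertible and 3 ≠ 0, and let G ⊆ R* be a subgroup with -1 ∈ G that is 2-maximal (i.e., a - b = 2(c - d) with a,b,c,d ∈ G implies a = b or a = -b). Then 2 ∉ G and 3 ∉ G. -/
section

variable {R : Type*} [CommRing R]

def Subgroup.IsTwoMaximal (G : Subgroup Rˣ) : Prop :=
  ∀ a b c d : Rˣ, a ∈ G → b ∈ G → c ∈ G → d ∈ G →
    (a : R) - (b : R) = 2 * ((c : R) - (d : R)) → a = b ∨ a = -b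

theorem eq_one_or_eq_neg_one_of_mul_self_eq_or_eq_neg {M : Type*} [Group M] [HasDistribNeg M]
    {u : M} (h : u * u = u ∨ u * u = -u) : u = 1 ∨ u = -1 := by
  rcases h with h | h
  · exact Or.inl (mul_eq_right.mp h)
  · exact Or.inr (mul_right_cancel (h.trans (neg_one_mul u).symm))

namespace Subgroup.IsTwoMaximal

variable {G : Subgroup Rˣ} {u : Rˣ}

theorem two_eq_one_or_eq_neg_one (hG : G.IsTwoMaximal) (hu : u ∈ G) (h : (u : R) = 2) :
    (2 : R) = 1 ∨ (2 : R) = -1 := by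
  -- `4 - 2 = 2 * (2 - 1)`
  have key := hG (u * u) u u 1 (mul_mem hu hu) hu hu (one_mem G)
    (by push_cast; rw [h]; ring)
  rcases eq_one_or_eq_neg_one_of_mul_self_eq_or_eq_neg key with rfl | rfl <;>
    simp [← h]

theorem three_eq_one_or_eq_neg_one (hG : G.IsTwoMaximal) (hneg : (-1 : Rˣ) ∈ G) (hu : u ∈ G)
    (h : (u : R) = 3) : (3 : R) = 1 ∨ (3 : R) = -1 := by
  -- `9 + 3 = 2 * (9 - 3)`
  have key := hG (u * u) (-u) (u * u) u (mul_mem hu hu) (by simpa using mul_mem hneg hu)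
    (mul_mem hu hu) hu (by push_cast; rw [h]; ring)
  rw [neg_neg, or_comm] at key
  rcases eq_one_or_eq_neg_one_of_mul_self_eq_or_eq_neg key with rfl | rfl <;>
    simp [← h]

end Subgroup.IsTwoMaximal

end

theorem two_and_three_not_in_two_maximal_subgroup
    (R : Type*) [CommRing R] (h2 : IsUnit (2 : R)) (h3 : (3 : R) ≠ 0)
    (G : Subgroup Rˣ) (heven : (-1 : Rˣ) ∈ G)
    (hmax : ∀ a b c d : Rˣ, a ∈ G → b ∈ G → c ∈ G → d ∈ G →
      (a : R) - (b : R) = 2 * ((c : R) - (d : R)) → a = b ∨ a = -b) :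
    (∀ u : Rˣ, (u : R) = 2 → u ∉ G) ∧ (∀ u : Rˣ, (u : R) = 3 → u ∉ G) := by
  have hmax : G.IsTwoMaximal := hmax
  have : Nontrivial R := nontrivial_of_ne 3 0 h3
  have h4 : (4 : R) ≠ 0 := by
    simpa [show (4 : R) = 2 * 2 by norm_num] using (h2.mul h2).ne_zero
  refine ⟨fun u hu huG => ?_, fun u hu huG => ?_⟩
  · rcases hmax.two_eq_one_or_eq_neg_one huG hu with h | h
    · exact one_ne_zero (by linear_combination h : (1 : R) = 0)
    · exact h3 (by linear_combination h)
  · rcases hmax.three_eq_one_or_eq_neg_one heven huG hu with h | h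
    · exact h2.ne_zero (by linear_combination h)
    · exact h4 (by linear_combination h)
end

section
/- Let R be a commutative ring in which 2 is invertible and 3 ≠ 0, and let G ⊆ R* be an even 2-maximal subgroup. If a, b, c ∈ G satisfy a + b = 2c, then a = b = c. -/
theorem Units.ne_neg_of_add_eq_two_mul {R : Type*} [CommRing R] [Nontrivial R]
    (h2 : IsUnit (2 : R)) {a b c : Rˣ} (h : (a : R) + b = 2 * c) : a ≠ -b := by
  rintro rfl
  have hc : (2 : R) * c = 0 := by rw [← h, Units.val_neg, neg_add_cancel]
  exact c.ne_zero (h2.mul_right_eq_zero.mp hc)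

theorem two_maximal_a_add_b_eq_two_c_general
    (R : Type*) [CommRing R] (h2 : IsUnit (2 : R))
    (G : Subgroup Rˣ)
    (hmax : ∀ a b c d : Rˣ, a ∈ G → b ∈ G → c ∈ G → d ∈ G →
      (a : R) - (b : R) = 2 * ((c : R) - (d : R)) → a = b ∨ a = -b)
    (a b c : Rˣ) (ha : a ∈ G) (hb : b ∈ G) (hc : c ∈ G)
    (h : (a : R) + (b : R) = 2 * (c : R)) : a = b ∧ b = c := by
  nontriviality R
  obtain rfl | hneg := hmax a b c b ha hb hc hb (by linear_combination h)
  · exact ⟨rfl, Units.ext (h2.mul_left_cancel (by linear_combination h))⟩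
  · exact absurd hneg (Units.ne_neg_of_add_eq_two_mul h2 h)

theorem two_maximal_a_add_b_eq_two_c
    (R : Type*) [CommRing R] (h2 : IsUnit (2 : R)) (h3 : (3 : R) ≠ 0)
    (G : Subgroup Rˣ) (heven : (-1 : Rˣ) ∈ G)
    (hmax : ∀ a b c d : Rˣ, a ∈ G → b ∈ G → c ∈ G → d ∈ G →
      (a : R) - (b : R) = 2 * ((c : R) - (d : R)) → a = b ∨ a = -b)
    (a b c : Rˣ) (ha : a ∈ G) (hb : b ∈ G) (hc : c ∈ G)
    (h : (a : R) + (b : R) = 2 * (c : R)) : a = b ∧ b = c :=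
  two_maximal_a_add_b_eq_two_c_general R h2 G hmax a b c ha hb hc h
end

section
/- Let k be an even positive integer and G ⊆ ℂ the group of k-th roots of unity. Then G is 2-maximal in ℂ: whenever a, b, c, d ∈ G satisfy a - b = 2(c - d), we have a = b or a = -b. -/
/-!
Rational linear relations among `k`-th roots of unity survive the substitution `x ↦ x ^ j` for
`j` coprime to `k`, because a primitive root `ζ` and `ζ ^ j` share the minimal polynomial `Φ_k`.
Applied to `a - b = 2 (c - d)` this gives `‖c ^ j - d ^ j‖ ≤ 1` for all such `j`. If `y = c / d`
has order `q > 1`, the powers `y ^ j` run through all primitive `q`-th roots `μ`, so every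
`‖1 - μ‖ ≤ 1`, while `∏ μ, (1 - μ) = Φ_q(1)` is a nonzero integer. Hence `‖c - d‖ = ‖1 - y‖ ≥ 1`,
so `‖a - b‖ = 2 = ‖a‖ + ‖b‖`, and strict convexity of `ℂ` forces `a = -b`.
-/

open Polynomial

theorem IsPrimitiveRoot.aeval_pow_eq_zero_of_coprime {K : Type*} [Field K] [CharZero K]
    {ζ : K} {k : ℕ} (hζ : IsPrimitiveRoot ζ k) (hk : 0 < k) {P : ℚ[X]} (hP : aeval ζ P = 0)
    {j : ℕ} (hj : j.Coprime k) : aeval (ζ ^ j) P = 0 := by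
  have hdvd := minpoly.dvd ℚ ζ hP
  rw [← cyclotomic_eq_minpoly_rat hζ hk,
    cyclotomic_eq_minpoly_rat (hζ.pow_of_coprime j hj) hk] at hdvd
  exact minpoly.dvd_iff.mp hdvd

theorem sum_mul_pow_eq_zero_of_coprime {K ι : Type*} [Field K] [CharZero K] {ζ : K} {k : ℕ}
    (hζ : IsPrimitiveRoot ζ k) (hk : 0 < k) (s : Finset ι) (r : ι → ℚ) {x : ι → K}
    (hx : ∀ i, x i ^ k = 1) (hr : ∑ i ∈ s, (r i : K) * x i = 0) {j : ℕ} (hj : j.Coprime k) :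
    ∑ i ∈ s, (r i : K) * x i ^ j = 0 := by
  have : NeZero k := NeZero.of_pos hk
  choose e _ he using fun i => hζ.eq_pow_of_pow_eq_one (hx i)
  set P : ℚ[X] := ∑ i ∈ s, C (r i) * X ^ e i
  have haeval (z : K) : aeval z P = ∑ i ∈ s, (r i : K) * z ^ e i := by
    simp [P, map_sum, eq_ratCast]
  have hP := hζ.aeval_pow_eq_zero_of_coprime hk (P := P) (by simpa [haeval, he] using hr) hj
  have hconj (i : ι) : (ζ ^ j) ^ e i = x i ^ j := by rw [← he, ← pow_mul, ← pow_mul, mul_comm]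
  simpa [haeval, hconj] using hP

theorem exists_coprime_pow_eq_of_isPrimitiveRoot {R : Type*} [CommRing R] [IsDomain R] {k : ℕ}
    [NeZero k] {y μ : R} (hy : y ^ k = 1) (hμ : IsPrimitiveRoot μ (orderOf y)) :
    ∃ j, j.Coprime k ∧ y ^ j = μ := by
  have hdvd : orderOf y ∣ k := orderOf_dvd_of_pow_eq_one hy
  have : NeZero (orderOf y) := ⟨fun h0 => NeZero.ne k (Nat.eq_zero_of_zero_dvd (h0 ▸ hdvd))⟩
  obtain ⟨s, -, hs, rfl⟩ := (IsPrimitiveRoot.orderOf y).isPrimitiveRoot_iff.mp hμ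
  obtain ⟨u, hu⟩ := ZMod.unitsMap_surjective hdvd (ZMod.unitOfCoprime s hs)
  refine ⟨(u : ZMod k).val, ZMod.val_coe_unit_coprime u,
    pow_eq_pow_of_modEq ?_ (pow_orderOf_eq_one y)⟩
  rw [← ZMod.natCast_eq_natCast_iff]
  simpa [ZMod.unitsMap_def, ZMod.natCast_val] using congrArg Units.val hu

theorem one_le_prod_norm_one_sub_primitiveRoots {q : ℕ} (hq : 1 < q) :
    1 ≤ ∏ μ ∈ primitiveRoots q ℂ, ‖1 - μ‖ := by
  have hprod : ∏ μ ∈ primitiveRoots q ℂ, (1 - μ) = (((cyclotomic q ℤ).eval 1 : ℤ) : ℂ) := by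
    rw [← eq_intCast (Int.castRingHom ℂ), ← cyclotomic.eval_apply, map_one,
      cyclotomic_eq_prod_X_sub_primitiveRoots (Complex.isPrimitiveRoot_exp q (by omega)),
      eval_prod]
    simp
  have hne : (cyclotomic q ℤ).eval 1 ≠ 0 := by
    intro h0
    have h1 := ((isRoot_cyclotomic_iff_charZero (by omega)).mp h0).eq_orderOf
    rw [orderOf_one] at h1
    omega
  rw [← norm_prod, hprod, Complex.norm_intCast]
  exact_mod_cast Int.one_le_abs hne

theorem one_le_norm_one_sub_of_forall_coprime {k : ℕ} [NeZero k] {y : ℂ} (hy : y ^ k = 1)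
    (hy1 : y ≠ 1) (hle : ∀ j, j.Coprime k → ‖1 - y ^ j‖ ≤ 1) : 1 ≤ ‖1 - y‖ := by
  have hq : 1 < orderOf y := by
    have := (orderOf_pos_iff.mpr (isOfFinOrder_iff_pow_eq_one.mpr ⟨k, NeZero.pos k, hy⟩))
    have := (orderOf_eq_one_iff (x := y)).not.mpr hy1
    omega
  have hmem : y ∈ primitiveRoots (orderOf y) ℂ :=
    (mem_primitiveRoots (by omega)).mpr (IsPrimitiveRoot.orderOf y)
  have hle' : ∀ μ ∈ primitiveRoots (orderOf y) ℂ, ‖1 - μ‖ ≤ 1 := by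
    intro μ hμ
    obtain ⟨j, hj, rfl⟩ :=
      exists_coprime_pow_eq_of_isPrimitiveRoot hy ((mem_primitiveRoots (by omega)).mp hμ)
    exact hle j hj
  calc 1 ≤ ∏ μ ∈ primitiveRoots (orderOf y) ℂ, ‖1 - μ‖ :=
        one_le_prod_norm_one_sub_primitiveRoots hq
    _ = ‖1 - y‖ * ∏ μ ∈ (primitiveRoots (orderOf y) ℂ).erase y, ‖1 - μ‖ :=
        (Finset.mul_prod_erase _ _ hmem).symm
    _ ≤ ‖1 - y‖ := mul_le_of_le_one_right (norm_nonneg _) <|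
        Finset.prod_le_one (fun _ _ => norm_nonneg _)
          fun μ hμ => hle' μ (Finset.mem_of_mem_erase hμ)

theorem one_le_norm_sub_of_forall_coprime {k : ℕ} [NeZero k] {c d : ℂ} (hc : c ^ k = 1)
    (hd : d ^ k = 1) (hcd : c ≠ d) (hle : ∀ j, j.Coprime k → ‖c ^ j - d ^ j‖ ≤ 1) :
    1 ≤ ‖c - d‖ := by
  have hd0 : d ≠ 0 := by rintro rfl; simp [NeZero.ne k] at hd
  have hnorm (n : ℕ) : ‖c ^ n - d ^ n‖ = ‖1 - (c / d) ^ n‖ := by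
    have hdn : ‖d ^ n‖ = 1 := by
      rw [norm_pow, Complex.norm_eq_one_of_pow_eq_one hd (NeZero.ne k), one_pow]
    calc ‖c ^ n - d ^ n‖ = ‖((c / d) ^ n - 1) * d ^ n‖ := by
          rw [sub_mul, one_mul, div_pow, div_mul_cancel₀ _ (pow_ne_zero n hd0)]
      _ = ‖1 - (c / d) ^ n‖ := by rw [norm_mul, hdn, mul_one, norm_sub_rev]
  rw [← pow_one c, ← pow_one d, hnorm 1, pow_one]
  exact one_le_norm_one_sub_of_forall_coprime (y := c / d)
    (by rw [div_pow, hc, hd, div_one]) (by rwa [ne_eq, div_eq_one_iff_eq hd0])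
    fun j hj => hnorm j ▸ hle j hj

theorem eq_neg_of_norm_sub_eq_add {E : Type*} [NormedAddCommGroup E] [NormedSpace ℝ E]
    [StrictConvexSpace ℝ E] {a b : E} (hn : ‖a‖ = ‖b‖) (h : ‖a - b‖ = ‖a‖ + ‖b‖) : a = -b :=
  (sameRay_iff_norm_add.mpr (by rwa [norm_neg, ← sub_eq_add_neg])).eq_of_norm_eq
    (by rwa [norm_neg])

theorem roots_of_unity_two_maximal_general
    (k : ℕ) (hk : 0 < k)
    (a b c d : ℂ) (ha : a ^ k = 1) (hb : b ^ k = 1) (hc : c ^ k = 1) (hd : d ^ k = 1)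
    (h : a - b = 2 * (c - d)) : a = b ∨ a = -b := by
  have : NeZero k := NeZero.of_pos hk
  rcases eq_or_ne a b with hab | hab
  · exact Or.inl hab
  have hcd : c ≠ d := by
    rintro rfl
    exact hab (sub_eq_zero.mp (by simpa using h))
  have hnorm {x : ℂ} (hx : x ^ k = 1) : ‖x‖ = 1 := Complex.norm_eq_one_of_pow_eq_one hx hk.ne'
  have hsum (n : ℕ) : ∑ i, ((![1, -1, -2, 2] : Fin 4 → ℚ) i : ℂ) * ![a, b, c, d] i ^ n =
      a ^ n - b ^ n - 2 * (c ^ n - d ^ n) := by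
    simp only [Fin.sum_univ_four, Matrix.cons_val, Rat.cast_one, Rat.cast_neg, Rat.cast_ofNat]
    ring
  have hconj (j : ℕ) (hj : j.Coprime k) : a ^ j - b ^ j = 2 * (c ^ j - d ^ j) := by
    rw [← sub_eq_zero, ← hsum]
    refine sum_mul_pow_eq_zero_of_coprime (Complex.isPrimitiveRoot_exp k hk.ne') hk _ _
      (fun i => by fin_cases i <;> assumption) ?_ hj
    simpa [h] using hsum 1
  have hle (j : ℕ) (hj : j.Coprime k) : ‖c ^ j - d ^ j‖ ≤ 1 := by
    have := norm_sub_le (a ^ j) (b ^ j)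
    rw [hconj j hj, norm_mul, Complex.norm_two, norm_pow, norm_pow, hnorm ha, hnorm hb,
      one_pow] at this
    linarith
  have h2 : ‖a - b‖ = ‖a‖ + ‖b‖ := by
    refine le_antisymm (norm_sub_le a b) ?_
    rw [h, norm_mul, Complex.norm_two, hnorm ha, hnorm hb]
    linarith [one_le_norm_sub_of_forall_coprime hc hd hcd hle]
  exact Or.inr (eq_neg_of_norm_sub_eq_add (by rw [hnorm ha, hnorm hb]) h2)

theorem roots_of_unity_two_maximal
    (k : ℕ) (hk : 0 < k) (hke : Even k)
    (a b c d : ℂ) (ha : a ^ k = 1) (hb : b ^ k = 1) (hc : c ^ k = 1) (hd : d ^ k = 1)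
    (h : a - b = 2 * (c - d)) : a = b ∨ a = -b :=
  roots_of_unity_two_maximal_general k hk a b c d ha hb hc hd h
end

section
/- Let z ∈ ℂ be a root of unity of order n, and suppose 1 - z = 2u for some algebraic integer u. Then n ≤ 2, i.e., z = ±1. -/
/-!
Work in the ring `𝒪` of algebraic integers, where `2` is not a unit, and suppose `2 ∣ 1 - z`.
Then `2 ∣ 1 - z ^ j` for every `j`. Write `n = 2 ^ k * m` with `m` odd. For odd `m`, expanding
`1 = (1 - x) ^ m` with `x = 1 - z ^ (2 ^ k)` gives `x ^ 2 ∣ m x`, so `x = 0` (otherwise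
`2 ∣ x ∣ m` and `2` would divide `1`); hence `m = 1`. If `k ≥ 2`, some power `i` of `z` satisfies
`i ^ 2 = -1`, and `2 ∣ 1 - i` is impossible because `(1 - i) ^ 4 = -4` would make `1 / 4` an
algebraic integer.
-/

section

variable {R : Type*} [CommRing R]

theorem not_isUnit_two_of_isIntegral [Algebra.IsIntegral ℤ R] [FaithfulSMul ℤ R] :
    ¬IsUnit (2 : R) := by
  simpa using (isUnit_map_iff (algebraMap ℤ R) 2).not.mpr (by decide)

variable [IsDomain R]

theorem eq_one_of_pow_eq_one_of_two_dvd_one_sub (h2 : ¬IsUnit (2 : R)) {z : R} {n : ℕ}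
    (hn : Odd n) (hzn : z ^ n = 1) (hz : 2 ∣ 1 - z) : z = 1 := by
  by_contra hz1
  have hx : 1 - z ≠ 0 := sub_ne_zero.mpr (Ne.symm hz1)
  have hsq : (1 - z) ^ 2 ∣ (1 - z) * n := by
    have expand : (1 + -(1 - z)) ^ n - 1 ^ (n - 1) * -(1 - z) * n - 1 ^ n = (1 - z) * n := by
      rw [show 1 + -(1 - z) = z by ring, hzn]
      ring
    simpa only [neg_sq, expand] using sq_dvd_add_pow_sub_sub (-(1 - z)) 1 n
  have hxn : 1 - z ∣ (n : R) := (mul_dvd_mul_iff_left hx).mp (by rwa [← sq])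
  obtain ⟨j, rfl⟩ := hn
  have h2n : (2 : R) ∣ 2 * j + 1 := by exact_mod_cast hz.trans hxn
  exact h2 (isUnit_iff_dvd_one.mpr ((dvd_add_right (dvd_mul_right 2 _)).mp h2n))

theorem not_two_dvd_one_sub_of_sq_eq_neg_one [CharZero R] (h2 : ¬IsUnit (2 : R)) {i : R}
    (hi : i ^ 2 = -1) : ¬(2 : R) ∣ 1 - i := by
  rintro ⟨u, hu⟩
  -- `(2 * u) ^ 4 = (1 - i) ^ 4 = -4`
  have h4 : (4 : R) * (4 * u ^ 4 + 1) = 0 := by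
    linear_combination (-(1 - i) ^ 3 - (1 - i) ^ 2 * 2 * u - (1 - i) * 4 * u ^ 2 - 8 * u ^ 3) * hu
      + (i ^ 2 - 4 * i + 5) * hi
  have hu4 : 4 * u ^ 4 + 1 = 0 := (mul_eq_zero.mp h4).resolve_left (by norm_num)
  exact h2 (isUnit_iff_dvd_one.mpr ⟨-(2 * u ^ 4), by linear_combination hu4⟩)

theorem IsPrimitiveRoot.le_two_of_two_dvd_one_sub [CharZero R] (h2 : ¬IsUnit (2 : R))
    {z : R} {n : ℕ} (hn : n ≠ 0) (hz : IsPrimitiveRoot z n) (h : 2 ∣ 1 - z) : n ≤ 2 := by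
  have hdvd (j : ℕ) : 2 ∣ 1 - z ^ j := h.trans (one_sub_dvd_one_sub_pow z j)
  obtain ⟨k, m, hm, rfl⟩ := Nat.exists_eq_two_pow_mul_odd hn
  have hm1 : m = 1 := by
    have hzm : IsPrimitiveRoot (z ^ 2 ^ k) m := hz.pow (Nat.pos_of_ne_zero hn) rfl
    rw [eq_one_of_pow_eq_one_of_two_dvd_one_sub h2 hm hzm.pow_eq_one (hdvd _)] at hzm
    exact hzm.unique IsPrimitiveRoot.one
  subst hm1
  obtain hk | hk := Nat.lt_or_ge k 2
  · interval_cases k <;> norm_num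
  · obtain ⟨j, rfl⟩ := Nat.exists_eq_add_of_le' hk
    have hi : IsPrimitiveRoot (z ^ 2 ^ j) 4 := hz.pow (by positivity) (by ring)
    have hi2 : (z ^ 2 ^ j) ^ 2 = -1 :=
      (hi.pow (by norm_num) (by norm_num)).eq_neg_one_of_two_right
    exact absurd (hdvd _) (not_two_dvd_one_sub_of_sq_eq_neg_one h2 hi2)

end

theorem root_of_unity_one_sub_eq_two_mul_algebraic_integer
    (n : ℕ) (hn : 0 < n) (z : ℂ) (hz : IsPrimitiveRoot z n)
    (u : ℂ) (hu : IsIntegral ℤ u) (h : 1 - z = 2 * u) :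
    n ≤ 2 ∧ (z = 1 ∨ z = -1) := by
  have hle : n ≤ 2 := by
    let zO : integralClosure ℤ ℂ := ⟨z, hz.isIntegral hn⟩
    have hzO : IsPrimitiveRoot zO n :=
      hz.of_map_of_injective (f := (integralClosure ℤ ℂ).val) Subtype.val_injective
    have h2 : 2 ∣ 1 - zO := ⟨⟨u, hu⟩, Subtype.ext h⟩
    exact hzO.le_two_of_two_dvd_one_sub not_isUnit_two_of_isIntegral hn.ne' h2
  refine ⟨hle, ?_⟩
  interval_cases n
  · exact .inl (IsPrimitiveRoot.one_right_iff.mp hz)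
  · exact .inr hz.eq_neg_one_of_two_right
end

section
/- Let p be a prime, w = e^{2πi/p}, and S ⊆ ℤ/pℤ a subset. Define f : ℤ/pℤ → ℂ by f(x) = Σ_{t∈S} w^{xt}. Then for x, y ∈ (ℤ/pℤ)*, we have f(x) = f(y) if and only if xS = yS. -/
/-!
Multiplication by a unit permutes `ℤ/pℤ`, so `f(x)` is the sum of `w^s` over `s ∈ xS`, and it
suffices that a set `A ⊆ ℤ/pℤ` is determined by `∑_{a ∈ A} w^a` and `|A|`. For two sets `A`, `B`
of equal size with equal sums, `∑_A X^a - ∑_B X^b ∈ ℚ[X]` has degree `< p`, vanishes at `w` and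
at `1`, hence is divisible by `Φ_p · (X - 1) = X^p - 1`, so it is zero and `A = B`.
-/

open Polynomial Finset

theorem Polynomial.coeff_sum_X_pow {R : Type*} [Semiring R] (s : Finset ℕ) (n : ℕ) :
    (∑ i ∈ s, X ^ i : R[X]).coeff n = if n ∈ s then 1 else 0 := by
  simp [coeff_X_pow]

theorem Polynomial.sum_X_pow_injective (R : Type*) [Semiring R] [Nontrivial R] :
    Function.Injective (fun s : Finset ℕ => ∑ i ∈ s, (X : R[X]) ^ i) := by
  intro s t hst
  ext n
  have hn := congrArg (coeff · n) hst
  simp only [coeff_sum_X_pow] at hn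
  split_ifs at hn <;> simp_all

namespace IsPrimitiveRoot

variable {K : Type*} [Field K] [CharZero K] {p : ℕ} [Fact p.Prime] {w : K}

theorem polynomial_eq_zero (hw : IsPrimitiveRoot w p) {f : ℚ[X]} (hdeg : f.natDegree < p)
    (hw0 : aeval w f = 0) (h1 : f.eval 1 = 0) : f = 0 := by
  have hp : p.Prime := Fact.out
  have hcyc : cyclotomic p ℚ ∣ f := by
    rw [cyclotomic_eq_minpoly_rat hw hp.pos]
    exact minpoly.dvd ℚ w hw0
  have hX : cyclotomic 1 ℚ ∣ f := by
    rw [cyclotomic_one]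
    exact dvd_iff_isRoot.mpr h1
  have hdvd : X ^ p - 1 ∣ f := by
    rw [← cyclotomic_prime_mul_X_sub_one, ← cyclotomic_one]
    exact (cyclotomic.isCoprime_rat hp.one_lt.ne').mul_dvd hcyc hX
  exact eq_zero_of_dvd_of_natDegree_lt hdvd (by rwa [← C_1, natDegree_X_pow_sub_C])

theorem eq_of_sum_pow_val_eq (hw : IsPrimitiveRoot w p) {A B : Finset (ZMod p)}
    (hcard : #A = #B) (h : ∑ a ∈ A, w ^ a.val = ∑ b ∈ B, w ^ b.val) : A = B := by
  have hval : Function.Injective (ZMod.val : ZMod p → ℕ) := ZMod.val_injective p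
  have hsum (C : Finset (ZMod p)) :
      ∑ a ∈ C, (X : ℚ[X]) ^ a.val = ∑ i ∈ C.image ZMod.val, X ^ i :=
    (sum_image fun a _ b _ hab => hval hab).symm
  have hdeg (C : Finset (ZMod p)) : (∑ a ∈ C, (X : ℚ[X]) ^ a.val).natDegree < p := by
    refine (natDegree_sum_le_of_forall_le _ _ (n := p - 1) fun a _ => ?_).trans_lt
      (Nat.sub_one_lt (NeZero.ne p))
    rw [natDegree_X_pow]
    exact Nat.le_sub_one_of_lt a.val_lt
  have hf : ∑ a ∈ A, (X : ℚ[X]) ^ a.val - ∑ b ∈ B, X ^ b.val = 0 := hw.polynomial_eq_zero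
    ((natDegree_sub_le _ _).trans_lt (max_lt (hdeg A) (hdeg B)))
    (by simp [h]) (by simp [eval_finsetSum, hcard])
  rw [sub_eq_zero, hsum, hsum] at hf
  exact image_injective hval (sum_X_pow_injective ℚ hf)

end IsPrimitiveRoot

theorem circulant_eigenvalue_injectivity
    (p : ℕ) (hp : p.Prime) (S : Finset (ZMod p)) (x y : (ZMod p)ˣ) :
    (∑ t ∈ S, Complex.exp (2 * Real.pi * Complex.I / p) ^ (((x : ZMod p) * t).val)) =
      (∑ t ∈ S, Complex.exp (2 * Real.pi * Complex.I / p) ^ (((y : ZMod p) * t).val)) ↔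
    S.image (fun t => (x : ZMod p) * t) = S.image (fun t => (y : ZMod p) * t) := by
  have : Fact p.Prime := ⟨hp⟩
  set w := Complex.exp (2 * Real.pi * Complex.I / p)
  have hw : IsPrimitiveRoot w p := Complex.isPrimitiveRoot_exp p hp.ne_zero
  have hsum (u : (ZMod p)ˣ) :
      ∑ t ∈ S, w ^ ((u : ZMod p) * t).val = ∑ s ∈ S.image ((u : ZMod p) * ·), w ^ s.val :=
    (sum_image (f := (w ^ ·.val)) fun _ _ _ _ hab => u.isUnit.mul_right_injective hab).symm
  have hcard (u : (ZMod p)ˣ) : #(S.image ((u : ZMod p) * ·)) = #S :=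
    card_image_of_injective _ u.isUnit.mul_right_injective
  rw [hsum, hsum]
  exact ⟨hw.eq_of_sum_pow_val_eq ((hcard x).trans (hcard y).symm), fun h => by rw [h]⟩
end

section
/- Let k be an even number and p a prime with p > 6^{φ(k)} and p ≡ 1 (mod k), where φ is Euler's totient function. Then the unique subgroup E ⊆ (ℤ/pℤ)* of order k is 2-maximal: a - b = 2(c - d) with a, b, c, d ∈ E implies a = b or a = -b. -/
/-!
Write `a, b, c, d` as powers `g ^ i, g ^ j, g ^ l, g ^ m` of a primitive `k`-th root of unity `g`
mod `p`, and let `ζ` be a primitive `k`-th root of unity in `ℚ(ζ_k)`. Every conjugate of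
`w = ζ ^ i - ζ ^ j - 2 (ζ ^ l - ζ ^ m)` has absolute value at most `6`, so `|N w| ≤ 6 ^ φ k < p`,
while `p ∣ N w` because `ζ ↦ g` kills `w`; hence `w = 0`. For roots of unity `α, β, γ, δ` of a
number field with `α - β = 2 (γ - δ)` and `γ ≠ δ`, the difference `γ - δ = (α - β) / 2` is a nonzero
algebraic integer with all conjugates in the unit disk, hence a root of unity (Kronecker), which
forces `α = -β`. The resulting `ζ ^ i = ± ζ ^ j` descends back to
`g`, since `g` is a root of the cyclotomic polynomial, the minimal polynomial of `ζ`.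
-/

open Polynomial Module IntermediateField

theorem norm_map_eq_one_of_pow_eq_one {K F : Type*} [Monoid K] [FunLike F K ℂ]
    [MonoidHomClass F K ℂ] (φ : F) {n : ℕ} (hn : n ≠ 0) {x : K} (hx : x ^ n = 1) :
    ‖φ x‖ = 1 :=
  Complex.norm_eq_one_of_pow_eq_one (by rw [← map_pow, hx, map_one]) hn

theorem NumberField.eq_or_eq_neg_of_sub_eq_two_mul_sub {K : Type*} [Field K] [NumberField K]
    {n : ℕ} (hn : n ≠ 0) {a b c d : K} (ha : a ^ n = 1) (hb : b ^ n = 1) (hc : c ^ n = 1)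
    (hd : d ^ n = 1) (h : a - b = 2 * (c - d)) : a = b ∨ a = -b := by
  by_cases hcd : c = d
  · left
    rwa [hcd, sub_self, mul_zero, sub_eq_zero] at h
  right
  have hint : IsIntegral ℤ (c - d) :=
    (IsIntegral.of_pow (Nat.pos_of_ne_zero hn) (hc ▸ isIntegral_one)).sub
      (IsIntegral.of_pow (Nat.pos_of_ne_zero hn) (hd ▸ isIntegral_one))
  have hnorm_ab (φ : K →+* ℂ) : ‖φ a - φ b‖ = 2 * ‖φ (c - d)‖ := by
    rw [← map_sub, h, map_mul, norm_mul, map_ofNat, Complex.norm_two]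
  -- Kronecker: `c - d = (a - b) / 2` is a nonzero algebraic integer with all conjugates in the
  -- unit disk, hence a root of unity, so `‖φ a - φ b‖ = 2` and `φ a = -φ b`.
  obtain ⟨m, hm, hcdm⟩ := NumberField.Embeddings.pow_eq_one_of_norm_le_one K ℂ
    (sub_ne_zero.mpr hcd) hint fun φ ↦ by
      have := norm_sub_le (φ a) (φ b)
      rw [hnorm_ab, norm_map_eq_one_of_pow_eq_one φ hn ha,
        norm_map_eq_one_of_pow_eq_one φ hn hb] at this
      linarith
  obtain ⟨φ⟩ := (inferInstance : Nonempty (K →+* ℂ))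
  have hφa : ‖φ a‖ = 1 := norm_map_eq_one_of_pow_eq_one φ hn ha
  have hφb : ‖-φ b‖ = 1 := by rw [norm_neg, norm_map_eq_one_of_pow_eq_one φ hn hb]
  have : φ a = -φ b := by
    refine eq_of_norm_eq_of_norm_add_eq (hφa.trans hφb.symm) ?_
    rw [← sub_eq_add_neg, hnorm_ab, norm_map_eq_one_of_pow_eq_one φ hm.ne' hcdm, hφa, hφb]
    norm_num
  exact φ.injective (by rw [this, map_neg])

theorem NumberField.abs_norm_le_pow_finrank {K : Type*} [Field K] [NumberField K] {x : K} {B : ℝ}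
    (h : ∀ σ : K →ₐ[ℚ] ℂ, ‖σ x‖ ≤ B) : |(Algebra.norm ℚ x : ℝ)| ≤ B ^ finrank ℚ K := by
  have hprod := congrArg norm (Algebra.norm_eq_prod_embeddings ℚ ℂ x)
  rw [eq_ratCast, Complex.norm_ratCast, norm_prod] at hprod
  rw [hprod, ← AlgHom.card ℚ K ℂ, ← Finset.card_univ, ← Finset.prod_const]
  exact Finset.prod_le_prod (fun _ _ ↦ norm_nonneg _) fun σ _ ↦ h σ

theorem Algebra.norm_eq_coeff_zero_minpoly_pow {K : Type*} [Field K] [NumberField K] {x : K}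
    (hx : IsIntegral ℤ x) :
    Algebra.norm ℚ x =
      (((-1) ^ (minpoly ℤ x).natDegree * (minpoly ℤ x).coeff 0) ^ finrank ℚ⟮x⟯ K : ℤ) := by
  have hxℚ : IsIntegral ℚ x := .of_finite ℚ x
  rw [Algebra.norm_eq_norm_adjoin, Int.cast_pow, ← IntermediateField.adjoin.powerBasis_gen hxℚ,
    PowerBasis.norm_gen_eq_coeff_zero_minpoly, IntermediateField.adjoin.powerBasis_dim]
  simp [minpoly_gen, minpoly.isIntegrallyClosed_eq_field_fractions' ℚ hx,
    (minpoly.monic hx).natDegree_map]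

theorem IsPrimitiveRoot.aeval_eq_zero_of_aeval_eq_zero {K R : Type*} [Field K] [CharZero K]
    [CommRing R] [IsDomain R] {k : ℕ} (hk : 0 < k) {ζ : K} (hζ : IsPrimitiveRoot ζ k) {g : R}
    (hg : IsPrimitiveRoot g k) {P : ℤ[X]} (hP : aeval ζ P = 0) : aeval g P = 0 := by
  have : NeZero k := ⟨hk.ne'⟩
  have : NeZero (k : R) := hg.neZero'
  obtain ⟨Q, rfl⟩ : cyclotomic k ℤ ∣ P := by
    rw [cyclotomic_eq_minpoly hζ hk]
    exact minpoly.isIntegrallyClosed_dvd (hζ.isIntegral hk) hP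
  rw [aeval_mul, aeval_def, ← eval_map, map_cyclotomic, isRoot_cyclotomic_iff.mpr hg, zero_mul]

theorem IsPrimitiveRoot.aeval_eq_zero_of_abs_norm_lt {K : Type*} [Field K] [NumberField K]
    {k : ℕ} (hk : 0 < k) {ζ : K} (hζ : IsPrimitiveRoot ζ k) {p : ℕ} [Fact p.Prime]
    {g : ZMod p} (hg : IsPrimitiveRoot g k) {Q : ℤ[X]} (hQ : aeval g Q = 0)
    (hnorm : |(Algebra.norm ℚ (aeval ζ Q) : ℝ)| < p) : aeval ζ Q = 0 := by
  set w := aeval ζ Q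
  have hw : IsIntegral ℤ w := by
    simpa [aeval_subalgebra_coe, mem_integralClosure_iff] using
      (aeval (⟨ζ, hζ.isIntegral hk⟩ : integralClosure ℤ K) Q).2
  -- `μ(Q(ζ)) = 0` for `μ = minpoly ℤ w` descends along `ζ ↦ g`: `μ(0) = μ(Q(g)) = 0` mod `p`.
  have hμ : (p : ℤ) ∣ (minpoly ℤ w).coeff 0 := by
    have := hζ.aeval_eq_zero_of_aeval_eq_zero hk hg (P := (minpoly ℤ w).comp Q)
      (by rw [aeval_comp, minpoly.aeval])
    rwa [aeval_comp, hQ, ← coeff_zero_eq_aeval_zero', eq_intCast,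
      ZMod.intCast_zmod_eq_zero_iff_dvd] at this
  refine (Algebra.norm_eq_zero_iff (R := ℚ)).mp ?_
  rw [Algebra.norm_eq_coeff_zero_minpoly_pow hw] at hnorm ⊢
  have hdvd := (hμ.mul_left ((-1) ^ (minpoly ℤ w).natDegree)).pow
    (finrank_pos : 0 < finrank ℚ⟮w⟯ K).ne'
  rw [Int.eq_zero_of_abs_lt_dvd hdvd (by exact_mod_cast hnorm), Int.cast_zero]

theorem Complex.norm_sub_sub_two_mul_sub_le {u v w x : ℂ} (hu : ‖u‖ ≤ 1) (hv : ‖v‖ ≤ 1)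
    (hw : ‖w‖ ≤ 1) (hx : ‖x‖ ≤ 1) : ‖u - v - 2 * (w - x)‖ ≤ 6 := by
  have huv := norm_sub_le u v
  have hwx := norm_sub_le w x
  have h := norm_sub_le (u - v) (2 * (w - x))
  rw [norm_mul, Complex.norm_two] at h
  linarith

theorem IsPrimitiveRoot.pow_sub_pow_eq_two_mul_of_zmod {K : Type*} [Field K] [NumberField K]
    {k : ℕ} (hk : 0 < k) {ζ : K} (hζ : IsPrimitiveRoot ζ k) {p : ℕ} [Fact p.Prime]
    (hp : 6 ^ finrank ℚ K < p) {g : ZMod p} (hg : IsPrimitiveRoot g k) {i j l m : ℕ}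
    (h : g ^ i - g ^ j = 2 * (g ^ l - g ^ m)) : ζ ^ i - ζ ^ j = 2 * (ζ ^ l - ζ ^ m) := by
  have hσ (σ : K →ₐ[ℚ] ℂ) (n : ℕ) : ‖σ ζ ^ n‖ ≤ 1 := by
    rw [norm_pow, norm_map_eq_one_of_pow_eq_one σ hk.ne' hζ.pow_eq_one, one_pow]
  have hbound (σ : K →ₐ[ℚ] ℂ) :
      ‖σ (aeval ζ (X ^ i - X ^ j - 2 * (X ^ l - X ^ m) : ℤ[X]))‖ ≤ 6 := by
    simpa [map_ofNat] using Complex.norm_sub_sub_two_mul_sub_le (hσ σ i) (hσ σ j) (hσ σ l) (hσ σ m)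
  have := hζ.aeval_eq_zero_of_abs_norm_lt hk hg (by simp [h, map_ofNat]) <|
    (NumberField.abs_norm_le_pow_finrank hbound).trans_lt (by exact_mod_cast hp)
  simpa [sub_eq_zero, map_ofNat] using this

theorem IsPrimitiveRoot.pow_eq_or_eq_neg_of_pow_eq_or_eq_neg {K R : Type*} [Field K] [CharZero K]
    [CommRing R] [IsDomain R] {k : ℕ} (hk : 0 < k) {ζ : K} (hζ : IsPrimitiveRoot ζ k) {g : R}
    (hg : IsPrimitiveRoot g k) {i j : ℕ} (h : ζ ^ i = ζ ^ j ∨ ζ ^ i = -ζ ^ j) :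
    g ^ i = g ^ j ∨ g ^ i = -g ^ j := by
  refine h.imp (fun h ↦ ?_) fun h ↦ ?_
  · have := hζ.aeval_eq_zero_of_aeval_eq_zero hk hg (P := X ^ i - X ^ j) (by simp [h])
    simpa [sub_eq_zero] using this
  · have := hζ.aeval_eq_zero_of_aeval_eq_zero hk hg (P := X ^ i + X ^ j) (by simp [h])
    simpa [add_eq_zero_iff_eq_neg] using this

theorem Subgroup.exists_isPrimitiveRoot_forall_exists_pow_eq {R : Type*} [CommRing R]
    [IsDomain R] (E : Subgroup Rˣ) [Finite E] :
    ∃ g : R, IsPrimitiveRoot g (Nat.card E) ∧ ∀ x ∈ E, ∃ i, g ^ i = (x : R) := by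
  obtain ⟨g, hg⟩ := IsCyclic.exists_ofOrder_eq_natCard (α := E)
  have hprim : IsPrimitiveRoot ((g : Rˣ) : R) (Nat.card E) := by
    rw [← hg, ← Subgroup.orderOf_coe, ← orderOf_units]
    exact .orderOf _
  refine ⟨_, hprim, fun x hx ↦ ?_⟩
  have : NeZero (Nat.card E) := ⟨Nat.card_pos.ne'⟩
  obtain ⟨i, -, hi⟩ := hprim.eq_pow_of_pow_eq_one <| by
    rw [← Units.val_pow_eq_pow_val, orderOf_dvd_iff_pow_eq_one.mp (E.orderOf_dvd_natCard hx),
      Units.val_one]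
  exact ⟨i, hi⟩

theorem unique_subgroup_of_order_k_is_two_maximal_general
    (k : ℕ) (hk : 0 < k)
    (p : ℕ) [Fact p.Prime]
    (hp : p > 6 ^ Nat.totient k)
    (E : Subgroup (ZMod p)ˣ) (hE : Nat.card E = k) :
    ∀ a b c d : (ZMod p)ˣ, a ∈ E → b ∈ E → c ∈ E → d ∈ E →
      (a : ZMod p) - (b : ZMod p) = 2 * ((c : ZMod p) - (d : ZMod p)) →
      a = b ∨ a = -b := by
  intro a b c d ha hb hc hd h
  obtain ⟨g, hg, hpow⟩ := E.exists_isPrimitiveRoot_forall_exists_pow_eq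
  rw [hE] at hg
  obtain ⟨i, hi⟩ := hpow a ha
  obtain ⟨j, hj⟩ := hpow b hb
  obtain ⟨l, hl⟩ := hpow c hc
  obtain ⟨m, hm⟩ := hpow d hd
  have : NeZero k := ⟨hk.ne'⟩
  have : IsCyclotomicExtension {k} ℚ (CyclotomicField k ℚ) :=
    CyclotomicField.isCyclotomicExtension k ℚ
  have hζ := IsCyclotomicExtension.zeta_spec k ℚ (CyclotomicField k ℚ)
  have hdeg := IsCyclotomicExtension.finrank (CyclotomicField k ℚ) (cyclotomic.irreducible_rat hk)
  have hrel := hζ.pow_sub_pow_eq_two_mul_of_zmod hk (by rw [hdeg]; exact hp) hg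
    (i := i) (j := j) (l := l) (m := m) (by rw [hi, hj, hl, hm, h])
  have hroot (n : ℕ) : (IsCyclotomicExtension.zeta k ℚ (CyclotomicField k ℚ) ^ n) ^ k = 1 := by
    rw [pow_right_comm, hζ.pow_eq_one, one_pow]
  have hab := hζ.pow_eq_or_eq_neg_of_pow_eq_or_eq_neg hk hg <|
    NumberField.eq_or_eq_neg_of_sub_eq_two_mul_sub hk.ne' (hroot i) (hroot j) (hroot l) (hroot m)
      hrel
  rw [hi, hj, ← Units.val_neg] at hab
  exact hab.imp Units.ext Units.ext

theorem unique_subgroup_of_order_k_is_two_maximal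
    (k : ℕ) (hk : 0 < k) (hke : Even k)
    (p : ℕ) [Fact p.Prime] (hkp : k ∣ p - 1)
    (hp : p > 6 ^ Nat.totient k)
    (E : Subgroup (ZMod p)ˣ) (hE : Nat.card E = k) :
    ∀ a b c d : (ZMod p)ˣ, a ∈ E → b ∈ E → c ∈ E → d ∈ E →
      (a : ZMod p) - (b : ZMod p) = 2 * ((c : ZMod p) - (d : ZMod p)) →
      a = b ∨ a = -b :=
  unique_subgroup_of_order_k_is_two_maximal_general k hk p hp E hE
end

section
/- Let E ⊆ (ℤ/pℤ)* be a 2-maximal even subgroup (p ≥ 5 prime), and fix a, b ∈ E with a ≠ b. Then the equation a' + 2b' = a + 2b with a', b' ∈ E has at most one solution other than (a', b') = (a, b), namely the hexagonal one a' = -a, b' = a + b (which requires a + b ∈ E). -/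
/-
Rewrite the equation as a' - a = 2(b - b'). By 2-maximality a' = a or a' = -a, and since 2 is
invertible mod p the equation then determines b': it is b in the first case and a + b in the second.
-/

theorem ZMod.two_ne_zero_of_three_le {n : ℕ} (hn : 3 ≤ n) : (2 : ZMod n) ≠ 0 := by
  have : ((2 : ℕ) : ZMod n) ≠ 0 := by
    rw [Ne, ZMod.natCast_eq_zero_iff]
    exact fun h => absurd (Nat.le_of_dvd two_pos h) (by omega)
  exact_mod_cast this

theorem hexagonal_solution_unique_general
    (p : ℕ) [Fact p.Prime] (hp : 5 ≤ p)
    (E : Subgroup (ZMod p)ˣ)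
    (hmax : ∀ x y z w : (ZMod p)ˣ, x ∈ E → y ∈ E → z ∈ E → w ∈ E →
      (x : ZMod p) - (y : ZMod p) = 2 * ((z : ZMod p) - (w : ZMod p)) → x = y ∨ x = -y)
    (a b : (ZMod p)ˣ) (ha : a ∈ E) (hb : b ∈ E) :
    ∀ a' b' : (ZMod p)ˣ, a' ∈ E → b' ∈ E →
      (a' : ZMod p) + 2 * (b' : ZMod p) = (a : ZMod p) + 2 * (b : ZMod p) →
      (a' = a ∧ b' = b) ∨
      ((a' : ZMod p) = -(a : ZMod p) ∧ (b' : ZMod p) = (a : ZMod p) + (b : ZMod p)) := by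
  intro a' b' ha' hb' heq
  have h2 : (2 : ZMod p) ≠ 0 := ZMod.two_ne_zero_of_three_le (by omega)
  have hdiff : (a' : ZMod p) - a = 2 * (b - b') := by linear_combination heq
  rcases hmax a' a b b' ha' ha hb hb' hdiff with rfl | hneg
  · left
    refine ⟨rfl, Units.ext <| mul_left_cancel₀ h2 ?_⟩
    linear_combination heq
  · have ha'_neg : (a' : ZMod p) = -a := by rw [hneg, Units.val_neg]
    right
    refine ⟨ha'_neg, mul_left_cancel₀ h2 ?_⟩
    linear_combination heq - ha'_neg

theorem hexagonal_solution_unique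
    (p : ℕ) [Fact p.Prime] (hp : 5 ≤ p)
    (E : Subgroup (ZMod p)ˣ) (heven : (-1 : (ZMod p)ˣ) ∈ E)
    (hmax : ∀ x y z w : (ZMod p)ˣ, x ∈ E → y ∈ E → z ∈ E → w ∈ E →
      (x : ZMod p) - (y : ZMod p) = 2 * ((z : ZMod p) - (w : ZMod p)) → x = y ∨ x = -y)
    (a b : (ZMod p)ˣ) (ha : a ∈ E) (hb : b ∈ E) (hab : a ≠ b) :
    ∀ a' b' : (ZMod p)ˣ, a' ∈ E → b' ∈ E →
      (a' : ZMod p) + 2 * (b' : ZMod p) = (a : ZMod p) + 2 * (b : ZMod p) →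
      (a' = a ∧ b' = b) ∨
      ((a' : ZMod p) = -(a : ZMod p) ∧ (b' : ZMod p) = (a : ZMod p) + (b : ZMod p)) :=
  hexagonal_solution_unique_general p hp E hmax a b ha hb
end
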